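/- arXiv:2204.10723 — 2 statements merged into one kernel-verified Lean document; each statement's English description precedes it below -/
import Mathlib

section
/- Under the matrix-scaled consensus dynamics ẋᵢ = sign(Sᵢ)·Σ_{j∈Nᵢ}(Sⱼxⱼ − Sᵢxᵢ) on a connected undirected graph, with each Sᵢ positive or negative definite, the virtual consensus point x^a(t) = (Σᵢ |Sᵢ⁻¹|)⁻¹ · Σᵢ sign(Sᵢ)·xᵢ(t) is time-invariant: d x^a/dt = 0 along every solution. -/
open Matrix
open scoped Classical

def MPosDef {d : ℕ} (A : Matrix (Fin d) (Fin d) ℝ) : Prop :=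
  ∀ x : Fin d → ℝ, x ≠ 0 → 0 < x ⬝ᵥ A.mulVec x

def MNegDef {d : ℕ} (A : Matrix (Fin d) (Fin d) ℝ) : Prop :=
  ∀ x : Fin d → ℝ, x ≠ 0 → x ⬝ᵥ A.mulVec x < 0

noncomputable def msign {d : ℕ} (A : Matrix (Fin d) (Fin d) ℝ) : ℝ :=
  if MPosDef A then 1 else -1

/-! Multiplying the dynamics of agent `i` by `sign(Sᵢ)` cancels the sign in front of its
consensus term, so the derivative of `Σᵢ sign(Sᵢ) xᵢ` is `Σᵢ Σ_{j ∈ Nᵢ} (Sⱼxⱼ − Sᵢxᵢ)`. Every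
edge `{i, j}` contributes `Sⱼxⱼ − Sᵢxᵢ` once from each endpoint, with opposite signs, so this
sum vanishes and `Σᵢ sign(Sᵢ) xᵢ` is constant; hence so is its image under any fixed matrix. -/

theorem SimpleGraph.sum_sum_neighborFinset_sub_eq_zero {V M : Type*} [Fintype V]
    [AddCommGroup M] (G : SimpleGraph V) [DecidableRel G.Adj] (v : V → M) :
    ∑ i, ∑ j ∈ G.neighborFinset i, (v j - v i) = 0 := by
  have hswap : ∑ i, ∑ j ∈ G.neighborFinset i, v j = ∑ j, ∑ i ∈ G.neighborFinset j, v j :=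
    Finset.sum_comm' fun i j => by simp [G.adj_comm]
  simp only [Finset.sum_sub_distrib, hswap, sub_self]

theorem msign_smul_msign_smul {d : ℕ} {M : Type*} [AddCommGroup M] [Module ℝ M]
    (A : Matrix (Fin d) (Fin d) ℝ) (v : M) : msign A • msign A • v = v := by
  unfold msign
  split_ifs <;> simp

theorem hasDerivAt_sum_msign_smul_eq_zero {n d : ℕ} (G : SimpleGraph (Fin n))
    [DecidableRel G.Adj] (S : Fin n → Matrix (Fin d) (Fin d) ℝ)
    (x : ℝ → Fin n → (Fin d → ℝ))
    (hx : ∀ i t, HasDerivAt (fun t => x t i)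
      (msign (S i) • ∑ j ∈ G.neighborFinset i,
        ((S j).mulVec (x t j) - (S i).mulVec (x t i))) t) (t : ℝ) :
    HasDerivAt (fun t => ∑ i, msign (S i) • x t i) 0 t := by
  have hsum := HasDerivAt.fun_sum (u := Finset.univ) fun i _ => (hx i t).const_smul (msign (S i))
  simp only [msign_smul_msign_smul] at hsum
  rwa [G.sum_sum_neighborFinset_sub_eq_zero fun i => (S i).mulVec (x t i)] at hsum

theorem stmt13_general {n d : ℕ} (G : SimpleGraph (Fin n)) [DecidableRel G.Adj]
    (S : Fin n → Matrix (Fin d) (Fin d) ℝ)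
    (x : ℝ → Fin n → (Fin d → ℝ))
    (hx : ∀ i t, HasDerivAt (fun t => x t i)
      (msign (S i) • ∑ j ∈ G.neighborFinset i,
        ((S j).mulVec (x t j) - (S i).mulVec (x t i))) t) :
    ∀ t : ℝ,
      (∑ i : Fin n, msign ((S i)⁻¹) • (S i)⁻¹)⁻¹.mulVec
          (∑ i : Fin n, msign (S i) • x t i) =
      (∑ i : Fin n, msign ((S i)⁻¹) • (S i)⁻¹)⁻¹.mulVec
          (∑ i : Fin n, msign (S i) • x 0 i) := by
  intro t
  have hderiv := hasDerivAt_sum_msign_smul_eq_zero G S x hx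
  rw [is_const_of_deriv_eq_zero (fun s => (hderiv s).differentiableAt)
    (fun s => (hderiv s).deriv) t 0]

theorem stmt13 {n d : ℕ} (G : SimpleGraph (Fin n)) [DecidableRel G.Adj]
    (hconn : G.Connected)
    (S : Fin n → Matrix (Fin d) (Fin d) ℝ)
    (hS : ∀ i, MPosDef (S i) ∨ MNegDef (S i))
    (x : ℝ → Fin n → (Fin d → ℝ))
    (hx : ∀ i t, HasDerivAt (fun t => x t i)
      (msign (S i) • ∑ j ∈ G.neighborFinset i,
        ((S j).mulVec (x t j) - (S i).mulVec (x t i))) t) :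
    ∀ t : ℝ,
      (∑ i : Fin n, msign ((S i)⁻¹) • (S i)⁻¹)⁻¹.mulVec
          (∑ i : Fin n, msign (S i) • x t i) =
      (∑ i : Fin n, msign ((S i)⁻¹) • (S i)⁻¹)⁻¹.mulVec
          (∑ i : Fin n, msign (S i) • x 0 i) :=
  stmt13_general G S x hx
end

section
/- Let μ = a + bi ∈ ℂ with a > 0 and let α > 0 satisfy a > b²/α². Then both roots of s² + αs + μ have strictly negative real part. -/
namespace Complex

lemma sq_add_ofReal_mul_add_eq_zero_iff {α : ℝ} {μ s : ℂ} :
    s ^ 2 + α * s + μ = 0 ↔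
      s.im ^ 2 = s.re ^ 2 + α * s.re + μ.re ∧ μ.im = -((2 * s.re + α) * s.im) := by
  rw [Complex.ext_iff]
  simp only [sq, add_re, add_im, mul_re, mul_im, ofReal_re, ofReal_im, zero_re, zero_im]
  constructor <;> rintro ⟨hre, him⟩ <;> constructor <;> linarith

/-- If `re s ≥ 0`, then `im s ^ 2 ≥ re μ` and `|2 re s + α| ≥ α`, so `(im μ) ^ 2 ≥ α ^ 2 re μ`. -/
lemma re_neg_of_sq_add_ofReal_mul_add_eq_zero {α : ℝ} (hα : 0 < α) {μ : ℂ}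
    (hμ : μ.im ^ 2 < α ^ 2 * μ.re) {s : ℂ} (hs : s ^ 2 + α * s + μ = 0) : s.re < 0 := by
  obtain ⟨hre, him⟩ := sq_add_ofReal_mul_add_eq_zero_iff.mp hs
  by_contra! hx
  have him_sq : μ.re ≤ s.im ^ 2 := by nlinarith
  have hcoeff : α ^ 2 ≤ (2 * s.re + α) ^ 2 := by nlinarith
  have : α ^ 2 * μ.re ≤ μ.im ^ 2 :=
    calc α ^ 2 * μ.re ≤ α ^ 2 * s.im ^ 2 := by gcongr
      _ ≤ (2 * s.re + α) ^ 2 * s.im ^ 2 := by gcongr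
      _ = μ.im ^ 2 := by rw [him]; ring
  linarith

end Complex

theorem stmt17_general (a b α : ℝ) (hα : 0 < α) (h : a > b ^ 2 / α ^ 2) :
    ∀ s : ℂ, s ^ 2 + (α : ℂ) * s + ((a : ℂ) + (b : ℂ) * Complex.I) = 0 → s.re < 0 := by
  intro s hs
  refine Complex.re_neg_of_sq_add_ofReal_mul_add_eq_zero hα ?_ hs
  rw [gt_iff_lt, div_lt_iff₀ (by positivity)] at h
  simpa [mul_comm] using h

theorem stmt17 (a b α : ℝ) (ha : 0 < a) (hα : 0 < α) (h : a > b ^ 2 / α ^ 2) :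
    ∀ s : ℂ, s ^ 2 + (α : ℂ) * s + ((a : ℂ) + (b : ℂ) * Complex.I) = 0 → s.re < 0 :=
  stmt17_general a b α hα h
end
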